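/- For every finite tree T and vertex r, \sum_{v \in V(T)} (H_r(v) + d(r,v)) = 2 W(T), where W(T) = \sum_{x,y \in V(T)} d(x,y) (each unordered pair counted once) is the Wiener index of T, i.e. CC_r(T) + \sum_{v} d(r,v) = 2W(T). -/

import Mathlib

open Finset

variable {V : Type*} [Fintype V] [DecidableEq V]

/-- One-step transition probability of simple random walk on `G`:
from `x`, move to a uniformly random neighbour. -/
noncomputable def SimpleGraph.step (G : SimpleGraph V) [DecidableRel G.Adj] (x y : V) : ℝ :=
  if G.Adj x y then ((G.degree x : ℝ))⁻¹ else 0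

/-- `G.firstHitProb t r x`: probability that the first visit to `x` of simple random walk
started at `r` occurs at time `t` (time `0` counts as a visit). -/
noncomputable def SimpleGraph.firstHitProb (G : SimpleGraph V) [DecidableRel G.Adj] :
    ℕ → V → V → ℝ
  | 0, r, x => if r = x then 1 else 0
  | (t+1), r, x => if r = x then 0 else ∑ z, G.step r z * G.firstHitProb t z x

/-- `G.hitTime r x`: expected hitting time `H_r(x)` of `x` for simple random walk from `r`. -/
noncomputable def SimpleGraph.hitTime (G : SimpleGraph V) [DecidableRel G.Adj] (r x : V) : ℝ :=
  ∑' t : ℕ, (t : ℝ) * G.firstHitProb t r x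

/-- `G.firstInProb t r x y`: probability that the first visit of the walk from `r`
to the set `{x, y}` occurs at time `t` and is a visit to `x` (time `0` counts). -/
noncomputable def SimpleGraph.firstInProb (G : SimpleGraph V) [DecidableRel G.Adj] :
    ℕ → V → V → V → ℝ
  | 0, r, x, _ => if r = x then 1 else 0
  | (t+1), r, x, y => if r = x ∨ r = y then 0 else ∑ z, G.step r z * G.firstInProb t z x y

/-- `G.probBefore r x y` = `p_r(x<y)`: probability that random walk from `r` visits `x`
strictly before `y` (visiting `x` at time `0` counts, so `p_r(r<y) = 1`). -/
noncomputable def SimpleGraph.probBefore (G : SimpleGraph V) [DecidableRel G.Adj]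
    (r x y : V) : ℝ :=
  ∑' t : ℕ, G.firstInProb t r x y

/-- `G.escProb x y` = `p_{xy}`: probability that random walk from `x` visits `y` before
returning to `x` (i.e. before visiting `x` again at a positive time). -/
noncomputable def SimpleGraph.escProb (G : SimpleGraph V) [DecidableRel G.Adj] (x y : V) : ℝ :=
  ∑ z, G.step x z * G.probBefore z y x

/-- `G.avoidProb y t z x`: probability that the walk started at `z` is at `x` at time `t`
and has not visited `y` at any time `≤ t`. -/
noncomputable def SimpleGraph.avoidProb (G : SimpleGraph V) [DecidableRel G.Adj] (y : V) :
    ℕ → V → V → ℝ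
  | 0, z, x => if z = y then 0 else if z = x then 1 else 0
  | (t+1), z, x => if z = y then 0 else ∑ w, G.step z w * G.avoidProb y t w x

/-- `G.visitsBefore x y` = `V_x^{†y}`: expected number of visits to `x` (counting time `0`)
of the walk started at `x` strictly before the first visit to `y`. -/
noncomputable def SimpleGraph.visitsBefore (G : SimpleGraph V) [DecidableRel G.Adj]
    (x y : V) : ℝ :=
  ∑' t : ℕ, G.avoidProb y t x x

/-- `G.coverDist r t (v, S)`: probability that the walk started at `r` is at `v` at time `t`
with `S` being the set of vertices visited so far. -/
noncomputable def SimpleGraph.coverDist (G : SimpleGraph V) [DecidableRel G.Adj] (r : V) :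
    ℕ → V × Finset V → ℝ
  | 0, p => if p = (r, {r}) then 1 else 0
  | (t+1), p => ∑ q : V × Finset V,
      (if p.2 = insert p.1 q.2 then G.step q.1 p.1 else 0) * G.coverDist r t q

/-- `G.coverTime r` = `CT_r(G)`: the expected number of steps of a cover tour of the walk
started at `r` (the walk stops once all vertices have been visited). -/
noncomputable def SimpleGraph.coverTime (G : SimpleGraph V) [DecidableRel G.Adj] (r : V) : ℝ :=
  ∑' t : ℕ, ∑ p : V × Finset V, if p.2 ≠ Finset.univ then G.coverDist r t p else 0

/-- `G.coverCost r` = `cc_r(G)`: the expected total cost of a cover tour from `r`, where a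
step taken when `k` vertices other than `r` have been visited so far costs `1 - k / n`,
with `n = |V| - 1`. -/
noncomputable def SimpleGraph.coverCost (G : SimpleGraph V) [DecidableRel G.Adj] (r : V) : ℝ :=
  ∑' t : ℕ, ∑ p : V × Finset V,
    if p.2 ≠ Finset.univ then
      G.coverDist r t p * (1 - ((p.2.erase r).card : ℝ) / ((Fintype.card V : ℝ) - 1))
    else 0

/-- `G.chargeD r x` = `D(x)`: the expected total charge departing from `x`, for the particle
started at `r` with charge `1` whose charge drops by `1/n` at each first visit to a vertex
other than `r` (it stops when the charge reaches `0`, i.e. when all vertices are covered). -/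
noncomputable def SimpleGraph.chargeD (G : SimpleGraph V) [DecidableRel G.Adj] (r x : V) : ℝ :=
  ∑' t : ℕ, ∑ S : Finset V,
    if S ≠ Finset.univ then
      G.coverDist r t (x, S) * (1 - ((S.erase r).card : ℝ) / ((Fintype.card V : ℝ) - 1))
    else 0

/-- The path graph on vertices `0, 1, …, n`, consecutive integers being adjacent. -/
def pathG (n : ℕ) : SimpleGraph (Fin (n+1)) where
  Adj i j := (i : ℕ) + 1 = j ∨ (j : ℕ) + 1 = i
  symm := ⟨fun i j h => h.symm⟩
  loopless := ⟨fun i h => by rcases h with h | h <;> omega⟩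

instance (n : ℕ) : DecidableRel (pathG n).Adj :=
  fun i j => inferInstanceAs (Decidable ((i : ℕ) + 1 = j ∨ (j : ℕ) + 1 = i))

/-- The star graph with center `0` and `n` leaves `1, …, n`. -/
def starG (n : ℕ) : SimpleGraph (Fin (n+1)) where
  Adj i j := i ≠ j ∧ (i = 0 ∨ j = 0)
  symm := ⟨fun i j h => ⟨h.1.symm, h.2.symm⟩⟩
  loopless := ⟨fun i h => h.1 rfl⟩

instance (n : ℕ) : DecidableRel (starG n).Adj :=
  fun i j => inferInstanceAs (Decidable (i ≠ j ∧ (i = 0 ∨ j = 0)))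
/-- The Wiener index of a graph: the sum of distances over all unordered pairs of vertices
(the diagonal terms vanish, so it is half the sum over ordered pairs). -/
noncomputable def wienerIndex {V : Type*} [Fintype V] (T : SimpleGraph V) : ℝ :=
  (∑ x : V, ∑ y : V, (T.dist x y : ℝ)) / 2

/-!
Hitting times are determined by the first-step equations `H_r(x) = 1 + ∑_z P(r,z) H_z(x)`
(`r ≠ x`), `H_x(x) = 0`: the walk is absorbed at `x` geometrically fast, so the series defining
`H` converge, and by the maximum principle the equations have a unique solution. In a tree
exactly one neighbour of `r ≠ x` is closer to `x`, so the distance to `x` is almost harmonic;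
with `n = |V|` and `D(u) = ∑_w d(u, w)` this shows that `(n - 1) d(r, x) + D(x) - D(r)` solves
the equations. Hence `H_r(x) + d(r, x) = n d(r, x) + D(x) - D(r)`, and summing over `x` leaves
`∑_x D(x) = 2W`.
-/

lemma Antitone.summable_of_summable_comp_mul {f : ℕ → ℝ} (hf : Antitone f) (h0 : ∀ n, 0 ≤ f n)
    {N : ℕ} (hN : 0 < N) (hs : Summable fun k => f (k * N)) : Summable f := by
  have block : ∀ K, ∑ t ∈ range (N * K), f t ≤ N * ∑ k ∈ range K, f (k * N) := by
    intro K
    induction K with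
    | zero => simp
    | succ K ih =>
      rw [Nat.mul_succ, sum_range_add, sum_range_succ, mul_add]
      refine add_le_add ih ?_
      calc ∑ j ∈ range N, f (N * K + j) ≤ ∑ j ∈ range N, f (K * N) :=
            sum_le_sum fun j _ => hf (by rw [Nat.mul_comm]; omega)
        _ = N * f (K * N) := by simp
  refine summable_of_sum_range_le h0 (c := N * ∑' k, f (k * N)) fun n => ?_
  calc ∑ t ∈ range n, f t ≤ ∑ t ∈ range (N * n), f t :=
        sum_le_sum_of_subset_of_nonneg (range_subset_range.mpr (Nat.le_mul_of_pos_left n hN))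
          fun t _ _ => h0 t
    _ ≤ N * ∑ k ∈ range n, f (k * N) := block n
    _ ≤ N * ∑' k, f (k * N) := by gcongr; exact hs.sum_le_tsum _ fun k _ => h0 _

namespace SimpleGraph

lemma Connected.exists_adj_dist_add_one {V : Type*} {G : SimpleGraph V} (hc : G.Connected)
    {u v : V} (h : u ≠ v) : ∃ w, G.Adj u w ∧ G.dist w v + 1 = G.dist u v := by
  obtain ⟨p, -, hp⟩ := hc.exists_path_of_dist u v
  obtain ⟨w, hadj, q, rfl⟩ := Walk.exists_eq_cons_of_ne h p
  refine ⟨w, hadj, le_antisymm ?_ ?_⟩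
  · simpa [← hp] using dist_le q
  · calc G.dist u v ≤ G.dist u w + G.dist w v := hc.dist_triangle
      _ = G.dist w v + 1 := by rw [dist_eq_one_iff_adj.mpr hadj, add_comm]

lemma IsTree.eq_of_adj_of_dist_add_one {V : Type*} {G : SimpleGraph V} (hT : G.IsTree)
    {u v w₁ w₂ : V} (h₁ : G.Adj u w₁) (hd₁ : G.dist w₁ v + 1 = G.dist u v)
    (h₂ : G.Adj u w₂) (hd₂ : G.dist w₂ v + 1 = G.dist u v) : w₁ = w₂ := by
  have geodesic : ∀ w (h : G.Adj u w), G.dist w v + 1 = G.dist u v →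
      ∃ p : G.Walk w v, (Walk.cons h p).IsPath := fun w h hd => by
    obtain ⟨p, -, hp⟩ := hT.connected.exists_path_of_dist w v
    exact ⟨p, Walk.isPath_of_length_eq_dist _ (by rw [Walk.length_cons, hp, hd])⟩
  obtain ⟨p₁, hp₁⟩ := geodesic w₁ h₁ hd₁
  obtain ⟨p₂, hp₂⟩ := geodesic w₂ h₂ hd₂
  obtain ⟨_, -, huniq⟩ := hT.existsUnique_path u v
  simpa using congrArg Walk.snd ((huniq _ hp₁).trans (huniq _ hp₂).symm)

section RandomWalk

variable {V : Type*} [Fintype V] (G : SimpleGraph V) [DecidableRel G.Adj]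

lemma step_nonneg (x y : V) : 0 ≤ G.step x y := by
  unfold step; split_ifs <;> positivity

lemma step_pos {x y : V} (h : G.Adj x y) : 0 < G.step x y := by
  have : 0 < G.degree x := G.degree_pos_iff_exists_adj x |>.mpr ⟨y, h⟩
  rw [step, if_pos h]
  positivity

lemma sum_step_mul (x : V) (f : V → ℝ) :
    ∑ y, G.step x y * f y = (G.degree x : ℝ)⁻¹ * ∑ y ∈ G.neighborFinset x, f y := by
  rw [mul_sum, neighborFinset_eq_filter, sum_filter]
  refine sum_congr rfl fun y _ => ?_
  unfold step
  split_ifs <;> simp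

lemma sum_step {x : V} (h : 0 < G.degree x) : ∑ y, G.step x y = 1 := by
  have := G.sum_step_mul x 1
  simp only [Pi.one_apply, mul_one, sum_const, card_neighborFinset_eq_degree, nsmul_eq_mul] at this
  rw [this, inv_mul_cancel₀ (by positivity)]

lemma eq_of_adj_of_forall_le {g : V → ℝ} {r z : V} (hr : g r = ∑ y, G.step r y * g y)
    (hmax : ∀ y, g y ≤ g r) (hz : G.Adj r z) : g z = g r := by
  have hdeg : 0 < G.degree r := G.degree_pos_iff_exists_adj r |>.mpr ⟨z, hz⟩
  have hzero : ∑ y, G.step r y * (g r - g y) = 0 := by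
    simp only [mul_sub, sum_sub_distrib, ← sum_mul, G.sum_step hdeg, one_mul, ← hr, sub_self]
  have hterm := (sum_eq_zero_iff_of_nonneg fun y _ =>
    mul_nonneg (G.step_nonneg r y) (sub_nonneg.mpr (hmax y))).mp hzero z (mem_univ z)
  linarith [(mul_eq_zero.mp hterm).resolve_left (G.step_pos hz).ne']

variable {G}

lemma sum_step_mul_dist_self {r : V} (h : 0 < G.degree r) :
    ∑ z, G.step r z * G.dist z r = 1 := by
  have hone : ∀ z ∈ G.neighborFinset r, (G.dist z r : ℝ) = 1 := fun z hz => by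
    rw [dist_eq_one_iff_adj.mpr ((G.mem_neighborFinset r z).mp hz).symm, Nat.cast_one]
  rw [sum_step_mul, sum_congr rfl hone, sum_const, card_neighborFinset_eq_degree, nsmul_one,
    inv_mul_cancel₀ (by positivity)]

lemma Connected.degree_pos_of_ne (hc : G.Connected) {u v : V} (h : u ≠ v) : 0 < G.degree u := by
  obtain ⟨w, hw, -⟩ := hc.exists_adj_dist_add_one h
  exact G.degree_pos_iff_exists_adj u |>.mpr ⟨w, hw⟩

lemma Connected.le_zero_of_harmonic (hc : G.Connected) {g : V → ℝ} {x : V} (hx : g x = 0)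
    (hg : ∀ r, r ≠ x → g r = ∑ z, G.step r z * g z) (r : V) : g r ≤ 0 := by
  have : Nonempty V := hc.nonempty
  obtain ⟨r₀, hr₀⟩ := Finite.exists_max g
  -- The maximum propagates to a neighbour closer to `x`, hence all the way to `x`.
  have hmax : ∀ n r, G.dist r x = n → g r = g r₀ → g r₀ = 0 := by
    intro n
    induction n with
    | zero => intro r hr hgr; rw [← hgr, hc.dist_eq_zero_iff.mp hr, hx]
    | succ n ih =>
      intro r hr hgr
      have hrx : r ≠ x := by rintro rfl; simp at hr
      obtain ⟨z, hz, hdz⟩ := hc.exists_adj_dist_add_one hrx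
      exact ih z (by omega) ((G.eq_of_adj_of_forall_le (hg r hrx) (hgr ▸ hr₀) hz).trans hgr)
  exact hmax _ r₀ rfl rfl ▸ hr₀ r

lemma Connected.eq_zero_of_harmonic (hc : G.Connected) {g : V → ℝ} {x : V} (hx : g x = 0)
    (hg : ∀ r, r ≠ x → g r = ∑ z, G.step r z * g z) (r : V) : g r = 0 :=
  le_antisymm (hc.le_zero_of_harmonic hx hg r) <| neg_nonpos.mp <|
    hc.le_zero_of_harmonic (g := -g) (x := x) (by simp [hx]) (fun r hr => by simp [hg r hr]) r

end RandomWalk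

variable (G : SimpleGraph V) [DecidableRel G.Adj]

/-- `G.survivalProb x t z`: probability that the walk started at `z` has not visited `x` at any
time `≤ t`. -/
noncomputable def survivalProb (x : V) : ℕ → V → ℝ
  | 0, z => if z = x then 0 else 1
  | t + 1, z => if z = x then 0 else ∑ u, G.step z u * survivalProb x t u

variable {G}

lemma survivalProb_self (x : V) (t : ℕ) : G.survivalProb x t x = 0 := by
  cases t <;> simp [survivalProb]

lemma survivalProb_nonneg (x : V) (t : ℕ) (z : V) : 0 ≤ G.survivalProb x t z := by
  induction t generalizing z with
  | zero => unfold survivalProb; split_ifs <;> norm_num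
  | succ t ih =>
    unfold survivalProb
    split_ifs
    · exact le_rfl
    · exact sum_nonneg fun u _ => mul_nonneg (G.step_nonneg z u) (ih u)

lemma firstHitProb_nonneg (x : V) (t : ℕ) (r : V) : 0 ≤ G.firstHitProb t r x := by
  induction t generalizing r with
  | zero => unfold firstHitProb; split_ifs <;> norm_num
  | succ t ih =>
    unfold firstHitProb
    split_ifs
    · exact le_rfl
    · exact sum_nonneg fun z _ => mul_nonneg (G.step_nonneg r z) (ih z)

lemma Connected.sum_range_firstHitProb (hc : G.Connected) (x : V) (t : ℕ) (r : V) :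
    ∑ s ∈ range (t + 1), G.firstHitProb s r x = 1 - G.survivalProb x t r := by
  induction t generalizing r with
  | zero =>
    simp only [zero_add, sum_range_one, firstHitProb, survivalProb]
    split_ifs <;> norm_num
  | succ t ih =>
    rw [sum_range_succ']
    by_cases h : r = x
    · simp [firstHitProb, survivalProb, h]
    · have hsum : ∑ s ∈ range (t + 1), ∑ z, G.step r z * G.firstHitProb s z x
          = ∑ z, G.step r z - ∑ z, G.step r z * G.survivalProb x t z := by
        rw [sum_comm, ← sum_sub_distrib]
        exact sum_congr rfl fun z _ => by rw [← mul_sum, ih z, mul_sub, mul_one]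
      simp only [firstHitProb, survivalProb, if_neg h, add_zero, hsum,
        G.sum_step (hc.degree_pos_of_ne h)]

lemma Connected.firstHitProb_succ (hc : G.Connected) (x : V) (t : ℕ) (r : V) :
    G.firstHitProb (t + 1) r x = G.survivalProb x t r - G.survivalProb x (t + 1) r := by
  have h := hc.sum_range_firstHitProb x (t + 1) r
  rw [sum_range_succ, hc.sum_range_firstHitProb x t r] at h
  linarith

lemma Connected.survivalProb_le_one (hc : G.Connected) (x : V) (t : ℕ) (r : V) :
    G.survivalProb x t r ≤ 1 := by
  have := hc.sum_range_firstHitProb x t r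
  linarith [sum_nonneg fun s (_ : s ∈ range (t + 1)) => firstHitProb_nonneg (G := G) x s r]

lemma Connected.antitone_survivalProb (hc : G.Connected) (x r : V) :
    Antitone fun t => G.survivalProb x t r :=
  antitone_nat_of_succ_le fun t => by
    linarith [hc.firstHitProb_succ x t r, firstHitProb_nonneg (G := G) x (t + 1) r]

lemma Connected.survivalProb_dist_lt_one (hc : G.Connected) (x r : V) :
    G.survivalProb x (G.dist r x) r < 1 := by
  induction h : G.dist r x generalizing r with
  | zero => rw [hc.dist_eq_zero_iff.mp h, survivalProb_self]; norm_num
  | succ n ih =>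
    have hrx : r ≠ x := by rintro rfl; simp at h
    obtain ⟨z, hz, hdz⟩ := hc.exists_adj_dist_add_one hrx
    have hlt : ∑ u, G.step r u * G.survivalProb x n u < ∑ u, G.step r u :=
      sum_lt_sum (fun u _ => mul_le_of_le_one_right (G.step_nonneg r u)
        (hc.survivalProb_le_one x n u))
        ⟨z, mem_univ z, mul_lt_of_lt_one_right (G.step_pos hz) (ih z (by omega))⟩
    simpa only [survivalProb, if_neg hrx, G.sum_step (hc.degree_pos_of_ne hrx)] using hlt

/-- Markov property at time `s`. -/
lemma survivalProb_add_le (x : V) {t : ℕ} {c : ℝ} (hc : ∀ u, G.survivalProb x t u ≤ c)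
    (s : ℕ) (r : V) : G.survivalProb x (s + t) r ≤ c * G.survivalProb x s r := by
  induction s generalizing r with
  | zero =>
    by_cases h : r = x
    · simp [h, survivalProb_self]
    · simpa [survivalProb, h] using hc r
  | succ s ih =>
    rw [Nat.add_right_comm]
    unfold survivalProb
    split_ifs
    · simp
    · rw [mul_sum]
      exact sum_le_sum fun u _ => by
        rw [mul_left_comm]
        exact mul_le_mul_of_nonneg_left (ih u) (G.step_nonneg r u)

lemma Connected.exists_survivalProb_card_le (hc : G.Connected) (x : V) :
    ∃ ρ, 0 ≤ ρ ∧ ρ < 1 ∧ ∀ r, G.survivalProb x (Fintype.card V) r ≤ ρ := by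
  have : Nonempty V := hc.nonempty
  obtain ⟨r₀, hr₀⟩ := Finite.exists_max fun r => G.survivalProb x (Fintype.card V) r
  refine ⟨_, survivalProb_nonneg x _ r₀, ?_, hr₀⟩
  obtain ⟨p, hp, hlen⟩ := hc.exists_path_of_dist r₀ x
  calc G.survivalProb x (Fintype.card V) r₀ ≤ G.survivalProb x (G.dist r₀ x) r₀ :=
        hc.antitone_survivalProb x r₀ (hlen ▸ hp.length_lt.le)
    _ < 1 := hc.survivalProb_dist_lt_one x r₀

lemma Connected.summable_survivalProb (hc : G.Connected) (x r : V) :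
    Summable fun t => G.survivalProb x t r := by
  have : Nonempty V := hc.nonempty
  obtain ⟨ρ, hρ₀, hρ₁, hρ⟩ := hc.exists_survivalProb_card_le x
  have decay : ∀ k r, G.survivalProb x (k * Fintype.card V) r ≤ ρ ^ k := by
    intro k
    induction k with
    | zero => simpa using hc.survivalProb_le_one x 0
    | succ k ih =>
      intro r
      calc G.survivalProb x ((k + 1) * Fintype.card V) r
          ≤ ρ * G.survivalProb x (k * Fintype.card V) r := by
            rw [Nat.succ_mul]; exact survivalProb_add_le x hρ _ r
        _ ≤ ρ ^ (k + 1) := by rw [pow_succ']; gcongr; exact ih r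
  exact (hc.antitone_survivalProb x r).summable_of_summable_comp_mul
    (survivalProb_nonneg x · r) Fintype.card_pos
    ((summable_geometric_of_lt_one hρ₀ hρ₁).of_nonneg_of_le
      (fun k => survivalProb_nonneg x _ r) fun k => decay k r)

lemma Connected.hasSum_firstHitProb (hc : G.Connected) (r x : V) :
    HasSum (fun t => G.firstHitProb t r x) 1 := by
  rw [hasSum_iff_tendsto_nat_of_nonneg (firstHitProb_nonneg x · r),
    ← Filter.tendsto_add_atTop_iff_nat 1]
  simp only [hc.sum_range_firstHitProb]
  simpa using ((hc.summable_survivalProb x r).tendsto_atTop_zero).const_sub 1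

lemma Connected.sum_range_mul_firstHitProb (hc : G.Connected) (r x : V) (T : ℕ) :
    ∑ t ∈ range (T + 1), (t : ℝ) * G.firstHitProb t r x
      = ∑ s ∈ range T, G.survivalProb x s r - T * G.survivalProb x T r := by
  induction T with
  | zero => simp
  | succ T ih =>
    rw [sum_range_succ, ih, hc.firstHitProb_succ, sum_range_succ]
    push_cast
    ring

lemma Connected.summable_mul_firstHitProb (hc : G.Connected) (r x : V) :
    Summable fun t : ℕ => (t : ℝ) * G.firstHitProb t r x := by
  have hs := hc.summable_survivalProb x r
  refine summable_of_sum_range_le (c := ∑' s, G.survivalProb x s r)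
    (fun t => mul_nonneg (Nat.cast_nonneg t) (firstHitProb_nonneg x t r)) fun n => ?_
  cases n with
  | zero => simpa using tsum_nonneg (survivalProb_nonneg x · r)
  | succ T =>
    rw [hc.sum_range_mul_firstHitProb]
    have := mul_nonneg T.cast_nonneg (survivalProb_nonneg (G := G) x T r)
    linarith [hs.sum_le_tsum (range T) fun s _ => survivalProb_nonneg x s r]

variable (G) in
lemma hitTime_self (x : V) : G.hitTime x x = 0 := by
  refine (tsum_congr fun t => ?_).trans tsum_zero
  cases t <;> simp [firstHitProb]

lemma Connected.hitTime_eq_one_add (hc : G.Connected) {r x : V} (h : r ≠ x) :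
    G.hitTime r x = 1 + ∑ z, G.step r z * G.hitTime z x := by
  have hsucc : ∀ z, HasSum (fun t : ℕ => ((t : ℝ) + 1) * G.firstHitProb t z x)
      (G.hitTime z x + 1) := fun z => by
    simpa [add_mul, hitTime] using
      (hc.summable_mul_firstHitProb z x).hasSum.add (hc.hasSum_firstHitProb z x)
  have hshift : HasSum (fun t : ℕ => ((t + 1 : ℕ) : ℝ) * G.firstHitProb (t + 1) r x)
      (∑ z, G.step r z * (G.hitTime z x + 1)) := by
    have hstep : (fun t : ℕ => ((t + 1 : ℕ) : ℝ) * G.firstHitProb (t + 1) r x)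
        = fun t : ℕ => ∑ z, G.step r z * (((t : ℝ) + 1) * G.firstHitProb t z x) := by
      funext t
      simp only [firstHitProb, if_neg h, mul_sum]
      push_cast
      exact sum_congr rfl fun z _ => by ring
    rw [hstep]
    exact hasSum_sum fun z _ => (hsucc z).mul_left (G.step r z)
  rw [hitTime, (hc.summable_mul_firstHitProb r x).tsum_eq_zero_add, hshift.tsum_eq]
  simp only [mul_add, mul_one, sum_add_distrib, G.sum_step (hc.degree_pos_of_ne h), hitTime]
  ring

lemma Connected.hitTime_eq_of_eq_one_add (hc : G.Connected) {x : V} {h : V → ℝ} (hx : h x = 0)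
    (hrec : ∀ r, r ≠ x → h r = 1 + ∑ z, G.step r z * h z) (r : V) : G.hitTime r x = h r := by
  have hdiff := hc.eq_zero_of_harmonic (g := fun u => G.hitTime u x - h u) (x := x)
    (by simp [hitTime_self, hx]) (fun u hu => by
      simp only [mul_sub, sum_sub_distrib]
      rw [hc.hitTime_eq_one_add hu, hrec u hu]
      ring) r
  linarith

variable (G) in
noncomputable def distSum (u : V) : ℝ := ∑ w, (G.dist u w : ℝ)

/-- Exactly one neighbour of `r` is closer to `v`; all the others are farther. -/
lemma IsTree.sum_step_mul_dist (hT : G.IsTree) {r v : V} (h : r ≠ v) :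
    ∑ z, G.step r z * G.dist z v = G.dist r v + 1 - 2 / G.degree r := by
  obtain ⟨z₀, hz₀, hd₀⟩ := hT.connected.exists_adj_dist_add_one h
  have hdist : ∀ z ∈ G.neighborFinset r,
      (G.dist z v : ℝ) = G.dist r v + 1 - if z = z₀ then 2 else 0 := by
    intro z hz
    rw [mem_neighborFinset] at hz
    split_ifs with hzz
    · subst hzz; rw [← hd₀]; push_cast; ring
    · have hd := hT.dist_eq_dist_add_one_of_adj v hz
      rw [dist_comm (u := v), dist_comm (u := v)] at hd
      rcases hd with hd | hd
      · exact absurd (hT.eq_of_adj_of_dist_add_one hz hd.symm hz₀ hd₀) hzz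
      · rw [hd]; push_cast; ring
  have hdeg : (0 : ℝ) < G.degree r := by exact_mod_cast hT.connected.degree_pos_of_ne h
  rw [sum_step_mul, sum_congr rfl hdist, sum_sub_distrib, sum_const,
    card_neighborFinset_eq_degree, sum_ite_eq', if_pos ((G.mem_neighborFinset r z₀).mpr hz₀),
    nsmul_eq_mul]
  field_simp

lemma IsTree.sum_step_mul_distSum (hT : G.IsTree) {r : V} (h : 0 < G.degree r) :
    ∑ z, G.step r z * G.distSum z
      = G.distSum r + (Fintype.card V - 1) * (1 - 2 / G.degree r) + 1 := by
  have hsum : ∀ w, ∑ z, G.step r z * G.dist z w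
      = G.dist r w + 1 - 2 / G.degree r + if w = r then (2 : ℝ) / G.degree r else 0 := by
    intro w
    by_cases hw : w = r
    · subst hw; simp [sum_step_mul_dist_self h]
    · simp [hw, hT.sum_step_mul_dist (Ne.symm hw)]
  simp only [distSum, mul_sum]
  rw [sum_comm]
  simp only [hsum, sum_add_distrib, sum_sub_distrib, sum_const, card_univ, sum_ite_eq', mem_univ,
    if_true, nsmul_eq_mul]
  ring

lemma IsTree.hitTime_eq (hT : G.IsTree) (r x : V) :
    G.hitTime r x = (Fintype.card V - 1) * G.dist r x + G.distSum x - G.distSum r := by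
  refine hT.connected.hitTime_eq_of_eq_one_add (x := x)
    (h := fun u => (Fintype.card V - 1) * G.dist u x + G.distSum x - G.distSum u)
    (by simp) (fun u hu => ?_) r
  have hdeg := hT.connected.degree_pos_of_ne hu
  simp only [mul_sub, mul_add, sum_sub_distrib, sum_add_distrib,
    mul_left_comm _ ((Fintype.card V : ℝ) - 1), ← mul_sum, ← sum_mul, G.sum_step hdeg,
    hT.sum_step_mul_dist hu, hT.sum_step_mul_distSum hdeg]
  ring

end SimpleGraph

/-- For every finite tree `T` and vertex `r`,
`∑_v (H_r(v) + d(r,v)) = 2 W(T)`, i.e. `CC_r(T) + ∑_v d(r,v) = 2 W(T)`. -/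
theorem tree_CoverCost_wiener {V : Type*} [Fintype V] [DecidableEq V]
    (T : SimpleGraph V) [DecidableRel T.Adj] (hT : T.IsTree) (r : V) :
    ∑ v : V, (T.hitTime r v + (T.dist r v : ℝ)) = 2 * wienerIndex T := by
  have hterm : ∀ v, T.hitTime r v + T.dist r v
      = Fintype.card V * T.dist r v + T.distSum v - T.distSum r := fun v => by
    rw [hT.hitTime_eq]
    ring
  simp only [hterm, sum_sub_distrib, sum_add_distrib, ← mul_sum, sum_const, card_univ,
    nsmul_eq_mul, wienerIndex]
  unfold SimpleGraph.distSum
  ring
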